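/- Let K be a field of characteristic zero, α, β ∈ K with β ≠ 0, and suppose λ, μ ∈ K are the roots of t² − αt − β. Let A = A(α,β,1) and let Ã' be the K-subalgebra of A generated by U and DU − λUD. Then A is free as a left Ã'-module with basis (Dᵏ)ₖ∈ℕ: every element of A can be written uniquely as a finite sum Σₖ aₖ Dᵏ with aₖ ∈ Ã'. -/
import Mathlib

set_option synthInstance.maxHeartbeats 1000000
set_option maxHeartbeats 1000000


noncomputable section

/-- Defining relations of the down-up algebra `A(α,β,γ)`:
`D = ι 0`, `U = ι 1`, relations `DU² = αUDU + βU²D + γU` and `D²U = αDUD + βUD² + γD`. -/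
inductive DownUpRel (K : Type) [Field K] (a b g : K) :
    FreeAlgebra K (Fin 2) → FreeAlgebra K (Fin 2) → Prop
  | rel1 : DownUpRel K a b g
      (FreeAlgebra.ι K (0 : Fin 2) * FreeAlgebra.ι K (1 : Fin 2) * FreeAlgebra.ι K (1 : Fin 2))
      (a • (FreeAlgebra.ι K (1 : Fin 2) * FreeAlgebra.ι K (0 : Fin 2) * FreeAlgebra.ι K (1 : Fin 2)) +
       b • (FreeAlgebra.ι K (1 : Fin 2) * FreeAlgebra.ι K (1 : Fin 2) * FreeAlgebra.ι K (0 : Fin 2)) +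
       g • FreeAlgebra.ι K (1 : Fin 2))
  | rel2 : DownUpRel K a b g
      (FreeAlgebra.ι K (0 : Fin 2) * FreeAlgebra.ι K (0 : Fin 2) * FreeAlgebra.ι K (1 : Fin 2))
      (a • (FreeAlgebra.ι K (0 : Fin 2) * FreeAlgebra.ι K (1 : Fin 2) * FreeAlgebra.ι K (0 : Fin 2)) +
       b • (FreeAlgebra.ι K (1 : Fin 2) * FreeAlgebra.ι K (0 : Fin 2) * FreeAlgebra.ι K (0 : Fin 2)) +
       g • FreeAlgebra.ι K (0 : Fin 2))

/-- The down-up algebra `A(α,β,γ)`. -/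
abbrev DownUp (K : Type) [Field K] (a b g : K) := RingQuot (DownUpRel K a b g)

/-- The generator `D` of `A(α,β,γ)`. -/
def DownUp.D (K : Type) [Field K] (a b g : K) : DownUp K a b g :=
  RingQuot.mkAlgHom K (DownUpRel K a b g) (FreeAlgebra.ι K (0 : Fin 2))

/-- The generator `U` of `A(α,β,γ)`. -/
def DownUp.U (K : Type) [Field K] (a b g : K) : DownUp K a b g :=
  RingQuot.mkAlgHom K (DownUpRel K a b g) (FreeAlgebra.ι K (1 : Fin 2))




noncomputable section DU

variable {K : Type} [Field K] (lam μ : K)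

/-- coefficient sequence c₀=0, c_{n+1} = μ c_n + 1 -/
def cseq : ℕ → K
  | 0 => 0
  | n + 1 => μ * cseq n + 1

abbrev VV (K : Type) [Field K] := (ℕ × ℕ × ℕ) →₀ K

def ee (p : ℕ × ℕ × ℕ) : VV K := Finsupp.single p 1

def Uop : VV K →ₗ[K] VV K :=
  Finsupp.lsum K fun p => LinearMap.toSpanSingleton K _ (ee (p.1 + 1, p.2.1, p.2.2))

def Mop : VV K →ₗ[K] VV K :=
  Finsupp.lsum K fun p => LinearMap.toSpanSingleton K _ (μ ^ p.1 • ee (p.1, p.2.1 + 1, p.2.2))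

def Cop : VV K →ₗ[K] VV K :=
  Finsupp.lsum K fun p => LinearMap.toSpanSingleton K _ ((cseq μ p.1 : K) • ee (p.1, p.2.1, p.2.2))

def Sop : VV K →ₗ[K] VV K :=
  Finsupp.lsum K fun p => LinearMap.toSpanSingleton K _ (ee (p.1, p.2.1, p.2.2 + 1))

@[simp] lemma Uop_ee (p : ℕ × ℕ × ℕ) : Uop (ee p : VV K) = ee (p.1 + 1, p.2.1, p.2.2) := by
  simp [Uop, ee]

@[simp] lemma Mop_ee (p : ℕ × ℕ × ℕ) :
    Mop μ (ee p : VV K) = μ ^ p.1 • ee (p.1, p.2.1 + 1, p.2.2) := by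
  simp [Mop, ee]

@[simp] lemma Cop_ee (p : ℕ × ℕ × ℕ) :
    Cop μ (ee p : VV K) = (cseq μ p.1 : K) • ee (p.1, p.2.1, p.2.2) := by
  simp [Cop, ee]

@[simp] lemma Sop_ee (p : ℕ × ℕ × ℕ) : Sop (ee p : VV K) = ee (p.1, p.2.1, p.2.2 + 1) := by
  simp [Sop, ee]

/-- the "action of D" on basis elements -/
def fD : ℕ → ℕ → ℕ → VV K
  | 0, 0, k => ee (0, 0, k + 1)
  | 0, j + 1, k => μ • (Mop μ + Cop μ) (fD 0 j k) + fD 0 j k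
  | i + 1, j, k => (Mop μ + Cop μ) (ee (i, j, k)) + lam • Uop (fD i j k)

def Dop : VV K →ₗ[K] VV K :=
  Finsupp.lsum K fun p => LinearMap.toSpanSingleton K _ (fD lam μ p.1 p.2.1 p.2.2)

@[simp] lemma Dop_ee (p : ℕ × ℕ × ℕ) :
    Dop lam μ (ee p : VV K) = fD lam μ p.1 p.2.1 p.2.2 := by
  simp [Dop, ee]

lemma MCU (x : VV K) :
    (Mop μ + Cop μ) (Uop x) = μ • Uop ((Mop μ + Cop μ) x) + Uop x := by
  have h : ((Mop μ + Cop μ) ∘ₗ Uop : VV K →ₗ[K] VV K)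
      = μ • (Uop ∘ₗ (Mop μ + Cop μ)) + Uop := by
    apply Finsupp.lhom_ext
    intro p b
    have : (Finsupp.single p b : VV K) = b • ee p := by simp [ee, Finsupp.smul_single]
    simp only [this, map_smul, LinearMap.comp_apply, LinearMap.add_apply, LinearMap.smul_apply]
    simp [cseq, pow_succ, mul_smul, smul_add]
    module
  exact DFunLike.congr_fun h x

lemma DopUop (x : VV K) :
    Dop lam μ (Uop x) = (Mop μ + Cop μ) x + lam • Uop (Dop lam μ x) := by
  have h : (Dop lam μ ∘ₗ Uop : VV K →ₗ[K] VV K)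
      = (Mop μ + Cop μ) + lam • (Uop ∘ₗ Dop lam μ) := by
    apply Finsupp.lhom_ext
    intro p b
    have : (Finsupp.single p b : VV K) = b • ee p := by simp [ee, Finsupp.smul_single]
    simp only [this, map_smul, LinearMap.comp_apply, LinearMap.add_apply, LinearMap.smul_apply]
    congr 1
    simp [fD]
  exact DFunLike.congr_fun h x

/-- the key inductive identity -/
lemma star (i j k : ℕ) :
    μ ^ i • fD lam μ i (j + 1) k + cseq μ i • fD lam μ i j k
      = μ • (Mop μ + Cop μ) (fD lam μ i j k) + fD lam μ i j k := by
  induction i generalizing j k with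
  | zero => simp [fD, cseq]
  | succ i ih =>
    have hWe : ∀ j' , (Mop μ + Cop μ) (ee (i, j', k) : VV K)
        = μ ^ i • ee (i, j' + 1, k) + cseq μ i • ee (i, j', k) := by
      intro j'; simp
    have ihU : μ • Uop ((Mop μ + Cop μ) (fD lam μ i j k)) + Uop (fD lam μ i j k)
        = μ ^ i • Uop (fD lam μ i (j + 1) k) + cseq μ i • Uop (fD lam μ i j k) := by
      have h2 := congrArg (Uop (K := K)) (ih j k)
      simp only [map_add, map_smul] at h2
      exact h2.symm
    simp only [fD, map_add, map_smul, MCU, cseq]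
    rw [ihU]
    simp only [hWe, map_add, map_smul]
    module

end DU

noncomputable section DU2

variable {K : Type} [Field K] (lam μ : K)

lemma starD (x : VV K) :
    Dop lam μ ((Mop μ + Cop μ) x) = μ • (Mop μ + Cop μ) (Dop lam μ x) + Dop lam μ x := by
  have h : (Dop lam μ ∘ₗ (Mop μ + Cop μ) : VV K →ₗ[K] VV K)
      = μ • ((Mop μ + Cop μ) ∘ₗ Dop lam μ) + Dop lam μ := by
    apply Finsupp.lhom_ext
    intro p b
    have hb : (Finsupp.single p b : VV K) = b • ee p := by simp [ee, Finsupp.smul_single]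
    simp only [hb, map_smul, LinearMap.comp_apply, LinearMap.add_apply, LinearMap.smul_apply]
    congr 1
    obtain ⟨i, j, k⟩ := p
    simp only [LinearMap.add_apply, Mop_ee, Cop_ee, Dop_ee, map_add, map_smul]
    exact star lam μ i j k
  exact DFunLike.congr_fun h x

lemma rel1op (x : VV K) :
    Dop lam μ (Uop (Uop x)) =
      (lam + μ) • Uop (Dop lam μ (Uop x)) + (-(lam * μ)) • Uop (Uop (Dop lam μ x))
        + (1 : K) • Uop x := by
  simp only [DopUop, MCU, map_add, map_smul, smul_add]
  module

lemma rel2op (x : VV K) :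
    Dop lam μ (Dop lam μ (Uop x)) =
      (lam + μ) • Dop lam μ (Uop (Dop lam μ x)) + (-(lam * μ)) • Uop (Dop lam μ (Dop lam μ x))
        + (1 : K) • Dop lam μ x := by
  simp only [DopUop, map_add, map_smul, starD, smul_add]
  module

/-- the representation of the down-up algebra on `VV K` -/
def rho : DownUp K (lam + μ) (-(lam * μ)) 1 →ₐ[K] Module.End K (VV K) :=
  RingQuot.liftAlgHom K ⟨FreeAlgebra.lift K ![Dop lam μ, Uop], by
    intro x y h
    have key : ∀ (op1 op2 : Module.End K (VV K)),
        (∀ v, op1 v = op2 v) → op1 = op2 := fun _ _ h => LinearMap.ext h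
    cases h with
    | rel1 =>
      simp only [map_mul, map_add, map_smul, FreeAlgebra.lift_ι_apply, Fin.isValue,
        Matrix.cons_val_zero, Matrix.cons_val_one, Matrix.head_cons]
      refine key _ _ fun v => ?_
      simp only [Module.End.mul_apply, LinearMap.add_apply, LinearMap.smul_apply]
      exact rel1op lam μ v
    | rel2 =>
      simp only [map_mul, map_add, map_smul, FreeAlgebra.lift_ι_apply, Fin.isValue,
        Matrix.cons_val_zero, Matrix.cons_val_one, Matrix.head_cons]
      refine key _ _ fun v => ?_
      simp only [Module.End.mul_apply, LinearMap.add_apply, LinearMap.smul_apply]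
      exact rel2op lam μ v⟩

@[simp] lemma rho_D : rho lam μ (DownUp.D K (lam + μ) (-(lam * μ)) 1) = Dop lam μ := by
  rw [DownUp.D, rho, RingQuot.liftAlgHom_mkAlgHom_apply]
  simp

@[simp] lemma rho_U : rho lam μ (DownUp.U K (lam + μ) (-(lam * μ)) 1) = Uop := by
  rw [DownUp.U, rho, RingQuot.liftAlgHom_mkAlgHom_apply]
  simp

end DU2

noncomputable section DU3

variable {K : Type} [Field K] (lam μ : K)

local notation "𝔸" => DownUp K (lam + μ) (-(lam * μ)) 1
local notation "Dg" => DownUp.D K (lam + μ) (-(lam * μ)) 1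
local notation "Ug" => DownUp.U K (lam + μ) (-(lam * μ)) 1

def vg : DownUp K (lam + μ) (-(lam * μ)) 1 := Dg * Ug - lam • (Ug * Dg)

lemma R1 : Dg * (Ug * Ug)
    = (lam + μ) • (Ug * (Dg * Ug)) + (-(lam * μ)) • (Ug * (Ug * Dg)) + Ug := by
  have h := RingQuot.mkAlgHom_rel K
    (DownUpRel.rel1 (K := K) (a := lam + μ) (b := -(lam * μ)) (g := 1))
  simp only [map_mul, map_add, map_smul, one_smul, mul_assoc] at h
  simpa only [DownUp.D, DownUp.U, mul_assoc] using h

lemma R2 : Dg * (Dg * Ug)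
    = (lam + μ) • (Dg * (Ug * Dg)) + (-(lam * μ)) • (Ug * (Dg * Dg)) + Dg := by
  have h := RingQuot.mkAlgHom_rel K
    (DownUpRel.rel2 (K := K) (a := lam + μ) (b := -(lam * μ)) (g := 1))
  simp only [map_mul, map_add, map_smul, one_smul, mul_assoc] at h
  simpa only [DownUp.D, DownUp.U, mul_assoc] using h

lemma DUg : Dg * Ug = vg lam μ + lam • (Ug * Dg) := by
  rw [vg]; abel

lemma vUg : vg lam μ * Ug = μ • (Ug * vg lam μ) + Ug := by
  rw [vg]
  simp only [sub_mul, mul_sub, smul_mul_assoc, mul_smul_comm, smul_sub, smul_smul, mul_assoc]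
  rw [R1]
  module

lemma Dvg : Dg * vg lam μ = μ • (vg lam μ * Dg) + Dg := by
  rw [vg]
  simp only [sub_mul, mul_sub, smul_mul_assoc, mul_smul_comm, smul_sub, smul_smul, mul_assoc]
  rw [R2]
  module

lemma cseq_succ_eq (i : ℕ) : cseq μ (i + 1) = μ ^ i + cseq μ i := by
  induction i with
  | zero => simp [cseq]
  | succ i ih =>
    rw [show cseq μ (i + 1 + 1) = μ * cseq μ (i + 1) + 1 from rfl]
    conv_lhs => rw [ih]
    rw [show cseq μ (i + 1) = μ * cseq μ i + 1 from rfl]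
    ring

lemma vUpow (i : ℕ) :
    vg lam μ * Ug ^ i = μ ^ i • (Ug ^ i * vg lam μ) + cseq μ i • Ug ^ i := by
  induction i with
  | zero => simp [cseq]
  | succ i ih =>
    rw [pow_succ, ← mul_assoc, ih, cseq_succ_eq]
    simp only [add_mul, smul_mul_assoc, mul_assoc, vUg, mul_add, mul_smul_comm, smul_add,
      smul_smul, ← pow_succ']
    rw [show Ug ^ i * (Ug * vg lam μ) = Ug ^ (i + 1) * vg lam μ by
      rw [← mul_assoc, ← pow_succ]]
    module

/-- monomial basis -/
def mon (p : ℕ × ℕ × ℕ) : DownUp K (lam + μ) (-(lam * μ)) 1 :=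
  Ug ^ p.1 * (vg lam μ ^ p.2.1 * Dg ^ p.2.2)

def SS : Submodule K (DownUp K (lam + μ) (-(lam * μ)) 1) :=
  Submodule.span K (Set.range (mon lam μ))

lemma mon_mem (p : ℕ × ℕ × ℕ) : mon lam μ p ∈ SS lam μ :=
  Submodule.subset_span ⟨p, rfl⟩

lemma mulU_mon (p : ℕ × ℕ × ℕ) : Ug * mon lam μ p ∈ SS lam μ := by
  have : Ug * mon lam μ p = mon lam μ (p.1 + 1, p.2.1, p.2.2) := by
    simp only [mon]
    rw [← mul_assoc, ← pow_succ']
  rw [this]; exact mon_mem _ _ _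

lemma mulU_S {x} (hx : x ∈ SS lam μ) : Ug * x ∈ SS lam μ := by
  induction hx using Submodule.span_induction with
  | mem y hy => obtain ⟨p, rfl⟩ := hy; exact mulU_mon lam μ p
  | zero => simp
  | add y z _ _ hy hz => rw [mul_add]; exact add_mem hy hz
  | smul c y _ hy => rw [mul_smul_comm]; exact Submodule.smul_mem _ _ hy

lemma mulv_mon (p : ℕ × ℕ × ℕ) : vg lam μ * mon lam μ p ∈ SS lam μ := by
  obtain ⟨i, j, k⟩ := p
  have : vg lam μ * mon lam μ (i, j, k)
      = μ ^ i • mon lam μ (i, j + 1, k) + cseq μ i • mon lam μ (i, j, k) := by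
    simp only [mon]
    rw [← mul_assoc, vUpow]
    simp only [add_mul, smul_mul_assoc, mul_assoc, ← pow_succ']
    rw [show vg lam μ * (vg lam μ ^ j * Dg ^ k) = vg lam μ ^ (j + 1) * Dg ^ k by
      rw [← mul_assoc, ← pow_succ']]
  rw [this]
  exact add_mem (Submodule.smul_mem _ _ (mon_mem _ _ _))
    (Submodule.smul_mem _ _ (mon_mem _ _ _))

lemma mulv_S {x} (hx : x ∈ SS lam μ) : vg lam μ * x ∈ SS lam μ := by
  induction hx using Submodule.span_induction with
  | mem y hy => obtain ⟨p, rfl⟩ := hy; exact mulv_mon lam μ p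
  | zero => simp
  | add y z _ _ hy hz => rw [mul_add]; exact add_mem hy hz
  | smul c y _ hy => rw [mul_smul_comm]; exact Submodule.smul_mem _ _ hy

lemma mulD_mon (p : ℕ × ℕ × ℕ) : Dg * mon lam μ p ∈ SS lam μ := by
  obtain ⟨i, j, k⟩ := p
  induction i generalizing j k with
  | zero =>
    induction j with
    | zero =>
      have : Dg * mon lam μ (0, 0, k) = mon lam μ (0, 0, k + 1) := by
        simp only [mon]; simp [pow_succ', mul_assoc]
      rw [this]; exact mon_mem _ _ _
    | succ j ihj =>
      have : Dg * mon lam μ (0, j + 1, k)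
          = μ • (vg lam μ * (Dg * mon lam μ (0, j, k))) + Dg * mon lam μ (0, j, k) := by
        simp only [mon, pow_zero, one_mul]
        rw [pow_succ', mul_assoc, ← mul_assoc, Dvg]
        simp only [add_mul, smul_mul_assoc, mul_assoc]
      rw [this]
      exact add_mem (Submodule.smul_mem _ _ (mulv_S lam μ ihj)) ihj
  | succ i ihi =>
    have : Dg * mon lam μ (i + 1, j, k)
        = vg lam μ * mon lam μ (i, j, k) + lam • (Ug * (Dg * mon lam μ (i, j, k))) := by
      simp only [mon]
      rw [pow_succ', mul_assoc, ← mul_assoc, DUg]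
      simp only [add_mul, smul_mul_assoc, mul_assoc]
    rw [this]
    exact add_mem (mulv_mon lam μ _) (Submodule.smul_mem _ _ (mulU_S lam μ (ihi j k)))

lemma mulD_S {x} (hx : x ∈ SS lam μ) : Dg * x ∈ SS lam μ := by
  induction hx using Submodule.span_induction with
  | mem y hy => obtain ⟨p, rfl⟩ := hy; exact mulD_mon lam μ p
  | zero => simp
  | add y z _ _ hy hz => rw [mul_add]; exact add_mem hy hz
  | smul c y _ hy => rw [mul_smul_comm]; exact Submodule.smul_mem _ _ hy

lemma SS_top : SS lam μ = ⊤ := by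
  rw [eq_top_iff]
  rintro x -
  obtain ⟨y, rfl⟩ := RingQuot.mkAlgHom_surjective K (DownUpRel K (lam + μ) (-(lam * μ)) 1) x
  have one_mem : (1 : 𝔸) ∈ SS lam μ := by
    have : (1 : 𝔸) = mon lam μ (0, 0, 0) := by simp [mon]
    rw [this]; exact mon_mem _ _ _
  have key : ∀ z ∈ SS lam μ,
      RingQuot.mkAlgHom K (DownUpRel K (lam + μ) (-(lam * μ)) 1) y * z ∈ SS lam μ := by
    induction y with
    | grade0 r =>
      intro z hz
      rw [AlgHom.commutes, ← Algebra.smul_def]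
      exact Submodule.smul_mem _ _ hz
    | grade1 i =>
      intro z hz
      fin_cases i
      · exact mulD_S lam μ hz
      · exact mulU_S lam μ hz
    | mul a b ha hb =>
      intro z hz
      rw [map_mul, mul_assoc]
      exact ha _ (hb _ hz)
    | add a b ha hb =>
      intro z hz
      rw [map_add, add_mul]
      exact add_mem (ha _ hz) (hb _ hz)
  simpa using key 1 one_mem

end DU3

noncomputable section DU4

variable {K : Type} [Field K] (lam μ : K)

local notation "𝔸" => DownUp K (lam + μ) (-(lam * μ)) 1
local notation "Dg" => DownUp.D K (lam + μ) (-(lam * μ)) 1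
local notation "Ug" => DownUp.U K (lam + μ) (-(lam * μ)) 1

lemma rho_v : rho lam μ (vg lam μ) = Mop μ + Cop μ := by
  rw [vg, map_sub, map_smul, map_mul, map_mul, rho_D, rho_U]
  refine LinearMap.ext fun x => ?_
  rw [LinearMap.sub_apply, LinearMap.smul_apply, Module.End.mul_apply, Module.End.mul_apply,
    DopUop]
  abel

lemma Dop_pow_e (k : ℕ) : (Dop lam μ ^ k) (ee (0, 0, 0) : VV K) = ee (0, 0, k) := by
  induction k with
  | zero => simp
  | succ k ih => rw [pow_succ', Module.End.mul_apply, ih, Dop_ee]; simp [fD]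

lemma MC_pow_e (j k : ℕ) : (((Mop μ + Cop μ) : VV K →ₗ[K] VV K) ^ j) (ee (0, 0, k))
    = ee (0, j, k) := by
  induction j with
  | zero => simp
  | succ j ih =>
    rw [pow_succ', Module.End.mul_apply, ih]
    simp [cseq]

lemma Uop_pow_e (i j k : ℕ) : ((Uop : VV K →ₗ[K] VV K) ^ i) (ee (0, j, k)) = ee (i, j, k) := by
  induction i with
  | zero => simp
  | succ i ih => rw [pow_succ', Module.End.mul_apply, ih, Uop_ee]

lemma rho_mon (p : ℕ × ℕ × ℕ) :
    rho lam μ (mon lam μ p) (ee (0, 0, 0)) = ee p := by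
  obtain ⟨i, j, k⟩ := p
  simp only [mon, map_mul, map_pow, rho_D, rho_U, rho_v, Module.End.mul_apply]
  rw [Dop_pow_e, MC_pow_e, Uop_pow_e]

/-- the evaluation map -/
def phi : DownUp K (lam + μ) (-(lam * μ)) 1 →ₗ[K] VV K :=
  (LinearMap.applyₗ (ee (0, 0, 0))).comp (rho lam μ).toLinearMap

@[simp] lemma phi_apply (x : 𝔸) : phi lam μ x = rho lam μ x (ee (0, 0, 0)) := rfl

lemma phi_mon (p : ℕ × ℕ × ℕ) : phi lam μ (mon lam μ p) = ee p := rho_mon lam μ p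

lemma phi_injective : Function.Injective (phi lam μ) := by
  have hsurj : Function.Surjective (Finsupp.linearCombination K (mon lam μ)) := by
    rw [← LinearMap.range_eq_top, Finsupp.range_linearCombination, ← SS, SS_top]
  have hcomp : (phi lam μ).comp (Finsupp.linearCombination K (mon lam μ))
      = LinearMap.id := by
    apply Finsupp.lhom_ext
    intro p b
    simp only [LinearMap.comp_apply, Finsupp.linearCombination_single, LinearMap.id_apply,
      map_smul, phi_mon, ee, Finsupp.smul_single, smul_eq_mul, mul_one]
  intro x y hxy
  obtain ⟨x', rfl⟩ := hsurj x
  obtain ⟨y', rfl⟩ := hsurj y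
  have : x' = y' := by
    have h1 := DFunLike.congr_fun hcomp x'
    have h2 := DFunLike.congr_fun hcomp y'
    simp only [LinearMap.comp_apply, LinearMap.id_apply] at h1 h2
    rw [← h1, ← h2, hxy]
  rw [this]

end DU4

noncomputable section DU5

variable {K : Type} [Field K] (lam μ : K)

local notation "𝔸" => DownUp K (lam + μ) (-(lam * μ)) 1
local notation "Dg" => DownUp.D K (lam + μ) (-(lam * μ)) 1
local notation "Ug" => DownUp.U K (lam + μ) (-(lam * μ)) 1

def W0 : Submodule K (VV K) :=
  Submodule.span K {x | ∃ i j : ℕ, x = ee (i, j, 0)}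

lemma W0_eval {w : VV K} (hw : w ∈ (W0 : Submodule K (VV K))) :
    ∀ p : ℕ × ℕ × ℕ, p.2.2 ≠ 0 → w p = 0 := by
  induction hw using Submodule.span_induction with
  | mem y hy =>
    obtain ⟨i, j, rfl⟩ := hy
    intro p hp
    rw [ee, Finsupp.single_apply]
    rw [if_neg]
    rintro rfl
    exact hp rfl
  | zero => intro p _; simp
  | add y z _ _ hy hz => intro p hp; rw [Finsupp.add_apply, hy p hp, hz p hp, add_zero]
  | smul c y _ hy => intro p hp; rw [Finsupp.smul_apply, hy p hp, smul_zero]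

lemma e000_mem_W0 : (ee (0, 0, 0) : VV K) ∈ (W0 : Submodule K (VV K)) :=
  Submodule.subset_span ⟨0, 0, rfl⟩

lemma ginj : Function.Injective (fun p : ℕ × ℕ × ℕ => (p.1, p.2.1, p.2.2 + 1)) := by
  rintro ⟨a, b, c⟩ ⟨a', b', c'⟩ h
  simp only [Prod.mk.injEq] at h
  obtain ⟨h1, h2, h3⟩ := h
  simp [h1, h2, Nat.succ_injective h3]

lemma Sop_eq : (Sop : VV K →ₗ[K] VV K)
    = Finsupp.lmapDomain K K (fun p : ℕ × ℕ × ℕ => (p.1, p.2.1, p.2.2 + 1)) := by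
  apply Finsupp.lhom_ext
  intro p b
  simp [Sop, ee, Finsupp.smul_single, Finsupp.mapDomain_single]

lemma Sop_apply_succ (x : VV K) (i j c : ℕ) : (Sop x) (i, j, c + 1) = x (i, j, c) := by
  rw [Sop_eq, Finsupp.lmapDomain_apply]
  exact Finsupp.mapDomain_apply ginj x (i, j, c)

lemma Sop_apply_zero (x : VV K) (i j : ℕ) : (Sop x) (i, j, 0) = 0 := by
  rw [Sop_eq, Finsupp.lmapDomain_apply]
  apply Finsupp.mapDomain_notin_range
  rintro ⟨⟨a, b, c⟩, hq⟩
  simpa using congrArg (fun r : ℕ × ℕ × ℕ => r.2.2) hq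

lemma Sop_pow_apply_add (k : ℕ) (x : VV K) (i j m : ℕ) :
    ((Sop ^ k) x) (i, j, m + k) = x (i, j, m) := by
  induction k generalizing x m with
  | zero => simp
  | succ k ih =>
    rw [pow_succ, Module.End.mul_apply, show m + (k + 1) = (m + 1) + k by omega, ih,
      Sop_apply_succ]

lemma Sop_pow_apply_lt (k : ℕ) (x : VV K) (i j m : ℕ) (h : m < k) :
    ((Sop ^ k) x) (i, j, m) = 0 := by
  induction k generalizing x m with
  | zero => omega
  | succ k ih =>
    rw [pow_succ, Module.End.mul_apply]
    rcases Nat.lt_or_ge m k with hm | hm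
    · exact ih (Sop x) m hm
    · have hmk : m = k := by omega
      subst hmk
      rw [show ((Sop ^ m) (Sop x)) (i, j, m) = ((Sop ^ m) (Sop x)) (i, j, 0 + m) by norm_num,
        Sop_pow_apply_add, Sop_apply_zero]

lemma Sop_pow_e (k : ℕ) : ((Sop : VV K →ₗ[K] VV K) ^ k) (ee (0, 0, 0)) = ee (0, 0, k) := by
  induction k with
  | zero => simp
  | succ k ih => rw [pow_succ', Module.End.mul_apply, ih, Sop_ee]

/-- the subalgebra Ã' -/
def Atil : Subalgebra K (DownUp K (lam + μ) (-(lam * μ)) 1) :=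
  Algebra.adjoin K ({Ug, vg lam μ} : Set 𝔸)

lemma Uop_comm_Sop : (Uop : VV K →ₗ[K] VV K) ∘ₗ Sop = Sop ∘ₗ Uop := by
  apply Finsupp.lhom_ext
  intro p b
  rw [show (Finsupp.single p b : VV K) = b • ee p by simp [ee, Finsupp.smul_single]]
  simp

lemma MC_comm_Sop : ((Mop μ + Cop μ) : VV K →ₗ[K] VV K) ∘ₗ Sop = Sop ∘ₗ (Mop μ + Cop μ) := by
  apply Finsupp.lhom_ext
  intro p b
  rw [show (Finsupp.single p b : VV K) = b • ee p by simp [ee, Finsupp.smul_single]]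
  simp

lemma Uop_mem_W0 {w : VV K} (hw : w ∈ (W0 : Submodule K (VV K))) : Uop w ∈ W0 := by
  induction hw using Submodule.span_induction with
  | mem y hy =>
    obtain ⟨i, j, rfl⟩ := hy
    rw [Uop_ee]
    exact Submodule.subset_span ⟨i + 1, j, rfl⟩
  | zero => simp
  | add y z _ _ hy hz => rw [map_add]; exact add_mem hy hz
  | smul c y _ hy => rw [map_smul]; exact Submodule.smul_mem _ _ hy

lemma MC_mem_W0 {w : VV K} (hw : w ∈ (W0 : Submodule K (VV K))) : (Mop μ + Cop μ) w ∈ W0 := by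
  induction hw using Submodule.span_induction with
  | mem y hy =>
    obtain ⟨i, j, rfl⟩ := hy
    rw [LinearMap.add_apply, Mop_ee, Cop_ee]
    exact add_mem (Submodule.smul_mem _ _ (Submodule.subset_span ⟨i, j + 1, rfl⟩))
      (Submodule.smul_mem _ _ (Submodule.subset_span ⟨i, j, rfl⟩))
  | zero => simp
  | add y z _ _ hy hz => rw [map_add]; exact add_mem hy hz
  | smul c y _ hy => rw [map_smul]; exact Submodule.smul_mem _ _ hy

lemma rho_adj {a : 𝔸} (ha : a ∈ Atil lam μ) :
    ((rho lam μ a) ∘ₗ Sop = Sop ∘ₗ (rho lam μ a)) ∧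
      (∀ w ∈ (W0 : Submodule K (VV K)), rho lam μ a w ∈ W0) := by
  induction ha using Algebra.adjoin_induction with
  | mem x hx =>
    rcases hx with rfl | hx
    · rw [rho_U]
      exact ⟨Uop_comm_Sop, fun w hw => Uop_mem_W0 hw⟩
    · rw [Set.mem_singleton_iff] at hx
      subst hx
      rw [rho_v]
      exact ⟨MC_comm_Sop μ, fun w hw => MC_mem_W0 μ hw⟩
  | algebraMap r =>
    rw [AlgHom.commutes]
    constructor
    · refine LinearMap.ext fun w => ?_
      simp [Module.algebraMap_end_apply, map_smul]
    · intro w hw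
      rw [Module.algebraMap_end_apply]
      exact Submodule.smul_mem _ _ hw
  | add x y hx hy ihx ihy =>
    rw [map_add]
    constructor
    · rw [LinearMap.add_comp, LinearMap.comp_add, ihx.1, ihy.1]
    · intro w hw
      rw [LinearMap.add_apply]
      exact add_mem (ihx.2 w hw) (ihy.2 w hw)
  | mul x y hx hy ihx ihy =>
    rw [map_mul]
    constructor
    · calc (rho lam μ x * rho lam μ y) ∘ₗ Sop
          = rho lam μ x ∘ₗ (rho lam μ y ∘ₗ Sop) := rfl
        _ = rho lam μ x ∘ₗ (Sop ∘ₗ rho lam μ y) := by rw [ihy.1]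
        _ = (rho lam μ x ∘ₗ Sop) ∘ₗ rho lam μ y := rfl
        _ = (Sop ∘ₗ rho lam μ x) ∘ₗ rho lam μ y := by rw [ihx.1]
        _ = Sop ∘ₗ (rho lam μ x * rho lam μ y) := rfl
    · intro w hw
      rw [Module.End.mul_apply]
      exact ihx.2 _ (ihy.2 w hw)

lemma hterm (a : Atil lam μ) (k : ℕ) :
    phi lam μ ((a : 𝔸) * Dg ^ k) = (Sop ^ k) (rho lam μ (a : 𝔸) (ee (0, 0, 0))) := by
  rw [phi_apply, map_mul, map_pow, rho_D, Module.End.mul_apply, Dop_pow_e, ← Sop_pow_e]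
  have hcomm : (rho lam μ (a : 𝔸)) ∘ₗ (Sop ^ k) = (Sop ^ k) ∘ₗ (rho lam μ (a : 𝔸)) := by
    induction k with
    | zero => rfl
    | succ k ih =>
      rw [pow_succ, show ((Sop : VV K →ₗ[K] VV K) ^ k) * Sop = (Sop ^ k) ∘ₗ Sop from rfl,
        ← LinearMap.comp_assoc, ih, LinearMap.comp_assoc, (rho_adj lam μ a.2).1,
        ← LinearMap.comp_assoc]
  exact DFunLike.congr_fun hcomm (ee (0, 0, 0))

lemma eval_sum (c : ℕ →₀ Atil lam μ) (i j k₀ : ℕ) :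
    ((c.sum fun k a => (Sop ^ k) (rho lam μ (a : 𝔸) (ee (0, 0, 0)))) : VV K) (i, j, k₀)
      = (rho lam μ ((c k₀ : 𝔸)) (ee (0, 0, 0))) (i, j, 0) := by
  have hW : ∀ k, rho lam μ ((c k : 𝔸)) (ee (0, 0, 0)) ∈ (W0 : Submodule K (VV K)) :=
    fun k => (rho_adj lam μ (c k).2).2 _ (e000_mem_W0)
  rw [Finsupp.sum, Finsupp.finset_sum_apply]
  have hsum : ∀ k ∈ c.support,
      ((Sop ^ k) (rho lam μ ((c k : 𝔸)) (ee (0, 0, 0)))) (i, j, k₀)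
        = if k = k₀ then (rho lam μ ((c k₀ : 𝔸)) (ee (0, 0, 0))) (i, j, 0) else 0 := by
    intro k _
    rcases lt_trichotomy k k₀ with hlt | heq | hgt
    · rw [if_neg (by omega), show k₀ = (k₀ - k) + k by omega, Sop_pow_apply_add]
      exact W0_eval (hW k) _ (by simp; omega)
    · subst heq
      rw [if_pos rfl, show ((Sop ^ k) (rho lam μ ((c k : 𝔸)) (ee (0,0,0)))) (i, j, k)
          = ((Sop ^ k) (rho lam μ ((c k : 𝔸)) (ee (0,0,0)))) (i, j, 0 + k) by norm_num,
        Sop_pow_apply_add]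
    · rw [if_neg (by omega)]
      exact Sop_pow_apply_lt _ _ _ _ _ hgt
  rw [Finset.sum_congr rfl hsum, Finset.sum_ite_eq' _ _ _]
  by_cases hk : k₀ ∈ c.support
  · rw [if_pos hk]
  · rw [if_neg hk]
    rw [Finsupp.notMem_support_iff] at hk
    rw [hk]
    simp

lemma sum_inj (c c' : ℕ →₀ Atil lam μ)
    (h : (c.sum fun k a => (a : 𝔸) * Dg ^ k) = c'.sum fun k a => (a : 𝔸) * Dg ^ k) :
    c = c' := by
  have h' : (c.sum fun k a => (Sop ^ k) (rho lam μ (a : 𝔸) (ee (0, 0, 0))))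
      = c'.sum fun k a => (Sop ^ k) (rho lam μ (a : 𝔸) (ee (0, 0, 0))) := by
    have hphi := congrArg (phi lam μ) h
    rw [map_finsuppSum, map_finsuppSum] at hphi
    calc (c.sum fun k a => (Sop ^ k) (rho lam μ (a : 𝔸) (ee (0, 0, 0))))
        = c.sum fun k a => phi lam μ ((a : 𝔸) * Dg ^ k) :=
          Finsupp.sum_congr fun k _ => (hterm lam μ (c k) k).symm
      _ = c'.sum fun k a => phi lam μ ((a : 𝔸) * Dg ^ k) := hphi
      _ = c'.sum fun k a => (Sop ^ k) (rho lam μ (a : 𝔸) (ee (0, 0, 0))) :=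
          Finsupp.sum_congr fun k _ => hterm lam μ (c' k) k
  ext k₀ : 1
  have hW : ∀ (e : ℕ →₀ Atil lam μ) (k : ℕ),
      rho lam μ ((e k : 𝔸)) (ee (0, 0, 0)) ∈ (W0 : Submodule K (VV K)) :=
    fun e k => (rho_adj lam μ (e k).2).2 _ (e000_mem_W0)
  have hfull : rho lam μ ((c k₀ : 𝔸)) (ee (0, 0, 0))
      = rho lam μ ((c' k₀ : 𝔸)) (ee (0, 0, 0)) := by
    ext p
    obtain ⟨i, j, m⟩ := p
    cases m with
    | zero =>
      have := congrArg (fun z : VV K => z (i, j, k₀)) h'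
      simpa only [eval_sum] using this
    | succ m =>
      rw [W0_eval (hW c k₀) (i, j, m + 1) (by simp),
        W0_eval (hW c' k₀) (i, j, m + 1) (by simp)]
  have : phi lam μ ((c k₀ : 𝔸)) = phi lam μ ((c' k₀ : 𝔸)) := by
    rw [phi_apply, phi_apply, hfull]
  exact Subtype.ext (phi_injective lam μ this)

end DU5

noncomputable section DU6

variable {K : Type} [Field K] (lam μ : K)

local notation "𝔸" => DownUp K (lam + μ) (-(lam * μ)) 1
local notation "Dg" => DownUp.D K (lam + μ) (-(lam * μ)) 1
local notation "Ug" => DownUp.U K (lam + μ) (-(lam * μ)) 1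

lemma Ug_mem : Ug ∈ Atil lam μ := Algebra.subset_adjoin (Set.mem_insert _ _)
lemma vg_mem : vg lam μ ∈ Atil lam μ :=
  Algebra.subset_adjoin (Set.mem_insert_of_mem _ rfl)

lemma hD_adj (a : Atil lam μ) :
    ∃ b b' : Atil lam μ, Dg * (a : 𝔸) = (b : 𝔸) + (b' : 𝔸) * Dg := by
  obtain ⟨a, ha⟩ := a
  simp only
  induction ha using Algebra.adjoin_induction with
  | mem x hx =>
    rcases hx with rfl | hx
    · refine ⟨⟨vg lam μ, vg_mem lam μ⟩, lam • ⟨Ug, Ug_mem lam μ⟩, ?_⟩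
      rw [DUg]
      simp [smul_mul_assoc]
    · rw [Set.mem_singleton_iff] at hx
      subst hx
      refine ⟨0, μ • ⟨vg lam μ, vg_mem lam μ⟩ + 1, ?_⟩
      rw [Dvg]
      push_cast
      simp [add_mul, smul_mul_assoc]
  | algebraMap r =>
    exact ⟨0, algebraMap K (Atil lam μ) r, by
      simp only [Subalgebra.coe_algebraMap, ZeroMemClass.coe_zero, zero_add]
      exact (Algebra.commutes r Dg).symm⟩
  | add x y hx hy ihx ihy =>
    obtain ⟨b1, b1', h1⟩ := ihx
    obtain ⟨b2, b2', h2⟩ := ihy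
    refine ⟨b1 + b2, b1' + b2', ?_⟩
    push_cast
    rw [mul_add, h1, h2, add_mul]
    abel
  | mul x y hx hy ihx ihy =>
    obtain ⟨b1, b1', h1⟩ := ihx
    obtain ⟨b2, b2', h2⟩ := ihy
    refine ⟨b1 * ⟨y, hy⟩ + b1' * b2, b1' * b2', ?_⟩
    push_cast
    rw [← mul_assoc, h1, add_mul, mul_assoc, h2, mul_add, ← mul_assoc, ← add_assoc]

def Tset : Submodule K (DownUp K (lam + μ) (-(lam * μ)) 1) where
  carrier := {x | ∃ c : ℕ →₀ Atil lam μ, x = c.sum fun k a => (a : 𝔸) * Dg ^ k}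
  zero_mem' := ⟨0, by simp⟩
  add_mem' := by
    rintro x y ⟨c, rfl⟩ ⟨c', rfl⟩
    refine ⟨c + c', ?_⟩
    rw [Finsupp.sum_add_index' (fun k => by simp) (fun k a b => by push_cast; rw [add_mul])]
  smul_mem' := by
    rintro r x ⟨c, rfl⟩
    refine ⟨r • c, ?_⟩
    rw [Finsupp.sum_smul_index' (fun k => by simp), Finsupp.smul_sum]
    exact (Finsupp.sum_congr fun k _ => by rw [SetLike.val_smul, smul_mul_assoc]).symm

lemma single_mem_T (k : ℕ) (a : Atil lam μ) : (a : 𝔸) * Dg ^ k ∈ Tset lam μ :=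
  ⟨Finsupp.single k a, by rw [Finsupp.sum_single_index (by simp)]⟩

lemma mulAtil_T (t : Atil lam μ) {x : 𝔸} (hx : x ∈ Tset lam μ) :
    (t : 𝔸) * x ∈ Tset lam μ := by
  obtain ⟨c, rfl⟩ := hx
  rw [Finsupp.sum, Finset.mul_sum]
  apply Submodule.sum_mem
  intro k _
  rw [← mul_assoc, ← MulMemClass.coe_mul]
  exact single_mem_T lam μ k (t * c k)

lemma mulD_T {x : 𝔸} (hx : x ∈ Tset lam μ) : Dg * x ∈ Tset lam μ := by
  obtain ⟨c, rfl⟩ := hx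
  rw [Finsupp.sum, Finset.mul_sum]
  apply Submodule.sum_mem
  intro k _
  obtain ⟨b, b', hb⟩ := hD_adj lam μ (c k)
  rw [← mul_assoc, hb, add_mul, mul_assoc, ← pow_succ']
  exact add_mem (single_mem_T lam μ k b) (single_mem_T lam μ (k + 1) b')

lemma Tset_top (x : 𝔸) : x ∈ Tset lam μ := by
  obtain ⟨y, rfl⟩ := RingQuot.mkAlgHom_surjective K (DownUpRel K (lam + μ) (-(lam * μ)) 1) x
  have one_mem : (1 : 𝔸) ∈ Tset lam μ := by
    have : (1 : 𝔸) = ((1 : Atil lam μ) : 𝔸) * Dg ^ 0 := by simp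
    rw [this]; exact single_mem_T lam μ 0 1
  have key : ∀ z ∈ Tset lam μ,
      RingQuot.mkAlgHom K (DownUpRel K (lam + μ) (-(lam * μ)) 1) y * z ∈ Tset lam μ := by
    induction y with
    | grade0 r =>
      intro z hz
      rw [AlgHom.commutes, ← Algebra.smul_def]
      exact Submodule.smul_mem _ _ hz
    | grade1 i =>
      intro z hz
      fin_cases i
      · exact mulD_T lam μ hz
      · exact mulAtil_T lam μ ⟨Ug, Ug_mem lam μ⟩ hz
    | mul a b ha hb =>
      intro z hz
      rw [map_mul, mul_assoc]
      exact ha _ (hb _ hz)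
    | add a b ha hb =>
      intro z hz
      rw [map_add, add_mul]
      exact add_mem (ha _ hz) (hb _ hz)
  simpa using key 1 one_mem

lemma main_aux (x : 𝔸) :
    ∃! c : ℕ →₀ Atil lam μ, x = c.sum fun k a => (a : 𝔸) * Dg ^ k := by
  obtain ⟨c, hc⟩ := Tset_top lam μ x
  refine ⟨c, hc, ?_⟩
  intro c' hc'
  exact sum_inj lam μ c' c (hc'.symm.trans hc)

end DU6


/-- For `β ≠ 0`, `λ, μ` the roots of `t² − αt − β`, and
`Ã'` the subalgebra of `A = A(α,β,1)` generated by `U` and `DU − λUD`, the algebra `A` is a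
free left `Ã'`-module with basis `(Dᵏ)ₖ`: every element of `A` is uniquely a finite sum
`Σₖ aₖ Dᵏ` with `aₖ ∈ Ã'`. -/
theorem downUp_free_over_tilde_subalgebra
    (K : Type) [Field K] [CharZero K] (α β lam μ : K) (hβ : β ≠ 0)
    (hsum : lam + μ = α) (hprod : lam * μ = -β) :
    ∀ x : DownUp K α β 1,
      ∃! c : ℕ →₀ (Algebra.adjoin K
          ({DownUp.U K α β 1,
            DownUp.D K α β 1 * DownUp.U K α β 1 -
              lam • (DownUp.U K α β 1 * DownUp.D K α β 1)} : Set (DownUp K α β 1))),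
        x = c.sum fun k a => (a : DownUp K α β 1) * (DownUp.D K α β 1) ^ k := by
  have hb2 : β = -(lam * μ) := by linear_combination hprod
  subst hsum
  subst hb2
  intro x
  exact main_aux lam μ x
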